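/- Let (X,σ) be a magnetic graph with σ taking values in S¹_p, X̂ its lift, and 𝒞: AE(X̂) → AE_σ(X) the compression map. Then for every magnetic molecule m^σ ∈ AE_σ(X), ‖m^σ‖_{AE_σ} = min{ ‖m‖_{AE} : m ∈ AE(X̂), 𝒞m = m^σ }, and in particular the minimum is attained. -/

import Mathlib

/-!
Compression sends the lifted atom `δ_(u,ξ) - δ_(v,ξσ_uv)` to `ξ • m^σ_uv`, a unimodular multiple
of a magnetic atom, so `𝒞` does not increase the Arens–Eells norm. Conversely, the `AE_σ` norm is
attained: grouping a representation by darts does not increase its cost, and on the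
finite-dimensional space of dart coefficients the `ℓ¹` cost is continuous and coercive, so it has
a minimum on the closed set of representations. Lifting an optimal representation atom by atom,
starting every lifted atom on the sheet `ξ = 1`, gives a preimage of no larger norm.
-/

namespace MagneticGraph

variable {V : Type*}

/-- `σ` is a signature on `G`: unimodular on edges and conjugate-symmetric. -/
def IsSignature (G : SimpleGraph V) (σ : V → V → ℂ) : Prop :=
  ∀ u v, G.Adj u v → ‖σ u v‖ = 1 ∧ σ v u = starRingEnd ℂ (σ u v)

/-- Product of the signature along (the darts of) a walk. -/
def sigProd {G : SimpleGraph V} (σ : V → V → ℂ) {u v : V} (w : G.Walk u v) : ℂ :=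
  (w.darts.map fun d => σ d.toProd.1 d.toProd.2).prod

/-- `(X,σ)` is unbalanced: some directed cycle has signature product `≠ 1`. -/
def Unbalanced (G : SimpleGraph V) (σ : V → V → ℂ) : Prop :=
  ∃ (u : V) (w : G.Walk u u), w.IsCycle ∧ sigProd σ w ≠ 1

/-- `(X,σ)` is balanced: every directed cycle has signature product `1`. -/
def Balanced (G : SimpleGraph V) (σ : V → V → ℂ) : Prop :=
  ∀ (u : V) (w : G.Walk u u), w.IsCycle → sigProd σ w = 1

/-- The σ-Lipschitz (semi)norm `max_{u∼v} |f(u) - σ_{uv} f(v)|`. -/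
noncomputable def lipNorm (G : SimpleGraph V) (σ : V → V → ℂ) (f : V → ℂ) : ℝ :=
  sSup {r : ℝ | ∃ u v, G.Adj u v ∧ r = ‖f u - σ u v * f v‖}

/-- The magnetic atom `m^σ_{uv} = δ_u - σ_{uv} δ_v`. -/
def atom [DecidableEq V] (σ : V → V → ℂ) (u v : V) : V → ℂ :=
  fun w => (if w = u then (1 : ℂ) else 0) - σ u v * (if w = v then (1 : ℂ) else 0)

/-- Membership in the magnetic Arens–Eells space: a finite linear combination of atoms. -/
def InAE [DecidableEq V] (G : SimpleGraph V) (σ : V → V → ℂ) (m : V → ℂ) : Prop :=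
  ∃ (n : ℕ) (a : Fin n → ℂ) (p q : Fin n → V),
    (∀ i, G.Adj (p i) (q i)) ∧ m = ∑ i, a i • atom σ (p i) (q i)

/-- The magnetic Arens–Eells norm: infimum of `Σ|aᵢ|` over representations by atoms. -/
noncomputable def aeNorm [DecidableEq V] (G : SimpleGraph V) (σ : V → V → ℂ) (m : V → ℂ) : ℝ :=
  sInf {s : ℝ | ∃ (n : ℕ) (a : Fin n → ℂ) (p q : Fin n → V),
    (∀ i, G.Adj (p i) (q i)) ∧ m = ∑ i, a i • atom σ (p i) (q i) ∧
    s = ∑ i, ‖a i‖}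

/-- The lift graph of `(X,σ)` on vertex set `V × S¹_p`: `(u,ω) ∼ (v,ω')` iff
`u ∼ v` and `ω' = ω σ_{uv}`. -/
def liftGraph (G : SimpleGraph V) (σ : V → V → ℂ) (p : ℕ) :
    SimpleGraph (V × rootsOfUnity p ℂ) :=
  SimpleGraph.fromRel fun a b =>
    G.Adj a.1 b.1 ∧ ((b.2 : ℂˣ) : ℂ) = ((a.2 : ℂˣ) : ℂ) * σ a.1 b.1

/-- The trivial signature. -/
def triv {W : Type*} : W → W → ℂ := fun _ _ => 1

/-- The compression map `(𝒞 m)(u) = Σ_{ξ ∈ S¹_p} ξ · m(u,ξ)`. -/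
noncomputable def compress {V : Type*} (p : ℕ) [NeZero p] (m : V × rootsOfUnity p ℂ → ℂ) : V → ℂ :=
  haveI : Fintype (rootsOfUnity p ℂ) := Fintype.ofFinite _
  fun u => ∑ ξ : rootsOfUnity p ℂ, ((ξ : ℂˣ) : ℂ) * m (u, ξ)

theorem pi_norm_le_sum_norm_apply {𝕜 ι : Type*} [SeminormedAddCommGroup 𝕜] [Fintype ι]
    (c : ι → 𝕜) : ‖c‖ ≤ ∑ i, ‖c i‖ :=
  (pi_norm_le_iff_of_nonneg (by positivity)).2 fun i =>
    Finset.single_le_sum (f := fun i => ‖c i‖) (fun _ _ => norm_nonneg _) (Finset.mem_univ i)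

theorem exists_isMinOn_sum_norm_of_sum_smul_eq {𝕜 ι E : Type*} [NormedField 𝕜] [ProperSpace 𝕜]
    [Fintype ι] [AddCommMonoid E] [Module 𝕜 E] [TopologicalSpace E] [ContinuousAdd E]
    [ContinuousSMul 𝕜 E] [T1Space E] (A : ι → E) {m : E} {c₀ : ι → 𝕜}
    (hc₀ : ∑ i, c₀ i • A i = m) :
    ∃ c ∈ {c : ι → 𝕜 | ∑ i, c i • A i = m},
      IsMinOn (fun c : ι → 𝕜 => ∑ i, ‖c i‖) {c | ∑ i, c i • A i = m} c := by
  have hclosed : IsClosed {c : ι → 𝕜 | ∑ i, c i • A i = m} :=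
    isClosed_singleton.preimage (by fun_prop)
  refine ContinuousOn.exists_isMinOn' (by fun_prop) hclosed hc₀ (Filter.mem_inf_of_left ?_)
  filter_upwards [(isCompact_closedBall (0 : ι → 𝕜) (∑ i, ‖c₀ i‖)).compl_mem_cocompact]
    with c hc
  rw [Set.mem_compl_iff, Metric.mem_closedBall, dist_zero_right, not_le] at hc
  exact (hc.trans_le (pi_norm_le_sum_norm_apply c)).le

section ArensEells

variable [DecidableEq V] {G : SimpleGraph V} {σ : V → V → ℂ} {m : V → ℂ}

theorem le_aeNorm_of_forall {r : ℝ} (hm : InAE G σ m)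
    (h : ∀ (n : ℕ) (a : Fin n → ℂ) (u v : Fin n → V), (∀ i, G.Adj (u i) (v i)) →
      m = ∑ i, a i • atom σ (u i) (v i) → r ≤ ∑ i, ‖a i‖) :
    r ≤ aeNorm G σ m := by
  obtain ⟨n, a, u, v, hadj, hrep⟩ := hm
  refine le_csInf ⟨_, n, a, u, v, hadj, hrep, rfl⟩ ?_
  rintro s ⟨n, a, u, v, hadj, hrep, rfl⟩
  exact h n a u v hadj hrep

theorem exists_fin_rep_of_sum {ι : Type*} [Fintype ι] (a : ι → ℂ) (u v : ι → V)
    (hadj : ∀ i, G.Adj (u i) (v i)) (hm : m = ∑ i, a i • atom σ (u i) (v i)) :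
    ∃ (n : ℕ) (b : Fin n → ℂ) (p q : Fin n → V), (∀ i, G.Adj (p i) (q i)) ∧
      m = ∑ i, b i • atom σ (p i) (q i) ∧ ∑ i, ‖b i‖ = ∑ i, ‖a i‖ := by
  let e := (Fintype.equivFin ι).symm
  refine ⟨Fintype.card ι, a ∘ e, u ∘ e, v ∘ e, fun i => hadj (e i), ?_, ?_⟩
  · rw [hm]
    exact (e.sum_comp fun i => a i • atom σ (u i) (v i)).symm
  · exact e.sum_comp fun i => ‖a i‖

theorem aeNorm_le_sum_norm {ι : Type*} [Fintype ι] (a : ι → ℂ) (u v : ι → V)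
    (hadj : ∀ i, G.Adj (u i) (v i)) (hm : m = ∑ i, a i • atom σ (u i) (v i)) :
    aeNorm G σ m ≤ ∑ i, ‖a i‖ := by
  obtain ⟨n, b, p, q, hadj', hrep, hsum⟩ := exists_fin_rep_of_sum a u v hadj hm
  refine csInf_le ⟨0, ?_⟩ ⟨n, b, p, q, hadj', hrep, hsum.symm⟩
  rintro s ⟨n, a, u, v, -, -, rfl⟩
  positivity

theorem exists_dart_rep_le [Fintype V] [DecidableRel G.Adj] {n : ℕ} (a : Fin n → ℂ)
    (u v : Fin n → V) (hadj : ∀ i, G.Adj (u i) (v i))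
    (hm : m = ∑ i, a i • atom σ (u i) (v i)) :
    ∃ c : G.Dart → ℂ, m = ∑ d, c d • atom σ d.fst d.snd ∧ ∑ d, ‖c d‖ ≤ ∑ i, ‖a i‖ := by
  let dart : Fin n → G.Dart := fun i => ⟨(u i, v i), hadj i⟩
  refine ⟨fun d => ∑ i with dart i = d, a i, ?_, ?_⟩
  · rw [hm, ← Finset.sum_fiberwise Finset.univ dart]
    refine Finset.sum_congr rfl fun d _ => ?_
    rw [Finset.sum_smul]
    refine Finset.sum_congr rfl fun i hi => ?_
    rw [← (Finset.mem_filter.mp hi).2]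
  · calc ∑ d, ‖∑ i with dart i = d, a i‖ ≤ ∑ d, ∑ i with dart i = d, ‖a i‖ :=
          Finset.sum_le_sum fun d _ => norm_sum_le _ _
      _ = ∑ i, ‖a i‖ := Finset.sum_fiberwise Finset.univ dart _

theorem exists_rep_sum_norm_eq_aeNorm [Fintype V] (hm : InAE G σ m) :
    ∃ (n : ℕ) (a : Fin n → ℂ) (u v : Fin n → V), (∀ i, G.Adj (u i) (v i)) ∧
      m = ∑ i, a i • atom σ (u i) (v i) ∧ ∑ i, ‖a i‖ = aeNorm G σ m := by
  classical
  obtain ⟨n, a, u, v, hadj, hrep⟩ := hm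
  obtain ⟨c₀, hc₀, -⟩ := exists_dart_rep_le a u v hadj hrep
  obtain ⟨c, hc, hmin⟩ :=
    exists_isMinOn_sum_norm_of_sum_smul_eq (fun d : G.Dart => atom σ d.fst d.snd) hc₀.symm
  obtain ⟨k, b, p, q, hadj', hrep', hsum⟩ :=
    exists_fin_rep_of_sum c (fun d => d.fst) (fun d => d.snd) (fun d => d.adj) hc.symm
  refine ⟨k, b, p, q, hadj', hrep', le_antisymm ?_ ?_⟩
  · refine le_aeNorm_of_forall ⟨n, a, u, v, hadj, hrep⟩ fun n' a' u' v' hadj'' hrep'' => ?_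
    obtain ⟨c', hc', hle⟩ := exists_dart_rep_le a' u' v' hadj'' hrep''
    exact hsum.trans_le ((hmin hc'.symm).trans hle)
  · exact aeNorm_le_sum_norm b p q hadj' hrep'

end ArensEells

section Compression

variable {σ : V → V → ℂ} {p : ℕ} [NeZero p]

theorem compress_sum_smul {ι : Type*} (s : Finset ι) (a : ι → ℂ)
    (f : ι → V × rootsOfUnity p ℂ → ℂ) :
    compress p (∑ i ∈ s, a i • f i) = ∑ i ∈ s, a i • compress p (f i) := by
  funext u
  simp only [compress, Finset.sum_apply, Pi.smul_apply, smul_eq_mul, Finset.mul_sum]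
  rw [Finset.sum_comm]
  exact Finset.sum_congr rfl fun i _ => Finset.sum_congr rfl fun ξ _ => by ring

theorem compress_sub (f g : V × rootsOfUnity p ℂ → ℂ) :
    compress p (f - g) = compress p f - compress p g := by
  funext u
  simp [compress, mul_sub]

variable [DecidableEq V]

theorem compress_indicator (z : V × rootsOfUnity p ℂ) :
    compress p (fun w => if w = z then 1 else 0) =
      fun u => if u = z.1 then ((z.2 : ℂˣ) : ℂ) else 0 := by
  funext u
  by_cases hu : u = z.1
  · subst hu
    simp [compress, Prod.ext_iff]
  · simp [compress, Prod.ext_iff, hu]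

theorem compress_atom_triv {x y : V × rootsOfUnity p ℂ}
    (h : ((y.2 : ℂˣ) : ℂ) = ((x.2 : ℂˣ) : ℂ) * σ x.1 y.1) :
    compress p (atom triv x y) = ((x.2 : ℂˣ) : ℂ) • atom σ x.1 y.1 := by
  have hatom : atom triv x y =
      (fun w => if w = x then 1 else 0) - (fun w => if w = y then 1 else 0) := by
    funext w
    simp [atom, triv]
  funext u
  simp only [hatom, compress_sub, compress_indicator, h, Pi.sub_apply, Pi.smul_apply, atom,
    smul_eq_mul]
  split_ifs <;> ring

end Compression

section Lift

variable {G : SimpleGraph V} {σ : V → V → ℂ} {p : ℕ}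

theorem liftGraph_adj_of_adj {x y : V × rootsOfUnity p ℂ} (h : G.Adj x.1 y.1)
    (hy : ((y.2 : ℂˣ) : ℂ) = ((x.2 : ℂˣ) : ℂ) * σ x.1 y.1) : (liftGraph G σ p).Adj x y := by
  rw [liftGraph, SimpleGraph.fromRel_adj]
  exact ⟨fun hxy => h.ne (congrArg Prod.fst hxy), Or.inl ⟨h, hy⟩⟩

theorem liftGraph_adj_iff (hσ : IsSignature G σ) {x y : V × rootsOfUnity p ℂ} :
    (liftGraph G σ p).Adj x y ↔
      G.Adj x.1 y.1 ∧ ((y.2 : ℂˣ) : ℂ) = ((x.2 : ℂˣ) : ℂ) * σ x.1 y.1 := by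
  refine ⟨fun h => ?_, fun h => liftGraph_adj_of_adj h.1 h.2⟩
  rw [liftGraph, SimpleGraph.fromRel_adj] at h
  obtain ⟨-, h | ⟨hadj, hx⟩⟩ := h
  · exact h
  obtain ⟨hnorm, hconj⟩ := hσ _ _ hadj.symm
  refine ⟨hadj.symm, ?_⟩
  -- `σ y x = conj (σ x y)` is the inverse of `σ x y` since `‖σ x y‖ = 1`
  rw [hx, hconj, mul_assoc, Complex.conj_mul', hnorm]
  simp

variable [DecidableEq V] [NeZero p]

theorem aeNorm_compress_le (hσ : IsSignature G σ) {m : V × rootsOfUnity p ℂ → ℂ}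
    (hm : InAE (liftGraph G σ p) triv m) :
    aeNorm G σ (compress p m) ≤ aeNorm (liftGraph G σ p) triv m := by
  refine le_aeNorm_of_forall hm fun n a x y hadj hrep => ?_
  have hadj' := fun i => (liftGraph_adj_iff hσ).1 (hadj i)
  have hcompress : compress p m =
      ∑ i, (a i * ((x i).2 : ℂˣ)) • atom σ (x i).1 (y i).1 := by
    rw [hrep, compress_sum_smul]
    simp_rw [compress_atom_triv (hadj' _).2, smul_smul]
  calc aeNorm G σ (compress p m) ≤ ∑ i, ‖a i * ((x i).2 : ℂˣ)‖ :=
        aeNorm_le_sum_norm _ _ _ (fun i => (hadj' i).1) hcompress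
    _ = ∑ i, ‖a i‖ := by
        simp [Complex.norm_eq_one_of_mem_rootsOfUnity (x _).2.2]

theorem exists_lift_of_rep (hval : ∀ u v, G.Adj u v → σ u v ^ p = 1) {mσ : V → ℂ} {n : ℕ}
    (a : Fin n → ℂ) (u v : Fin n → V) (hadj : ∀ i, G.Adj (u i) (v i))
    (hm : mσ = ∑ i, a i • atom σ (u i) (v i)) :
    ∃ m, InAE (liftGraph G σ p) triv m ∧ compress p m = mσ ∧
      aeNorm (liftGraph G σ p) triv m ≤ ∑ i, ‖a i‖ := by
  let ω i : rootsOfUnity p ℂ := rootsOfUnity.mkOfPowEq _ (hval _ _ (hadj i))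
  have hlift i : (liftGraph G σ p).Adj (u i, 1) (v i, ω i) :=
    liftGraph_adj_of_adj (hadj i) (by simp [ω])
  refine ⟨∑ i, a i • atom triv (u i, 1) (v i, ω i), ⟨n, a, _, _, hlift, rfl⟩, ?_,
    aeNorm_le_sum_norm a _ _ hlift rfl⟩
  rw [compress_sum_smul, hm]
  refine Finset.sum_congr rfl fun i _ => ?_
  rw [compress_atom_triv (σ := σ) (by simp [ω])]
  simp

end Lift

/-- `‖m^σ‖_{AE_σ} = min { ‖m‖_{AE} : 𝒞 m = m^σ }`, the minimum being
attained. -/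
theorem stmt11 {V : Type*} [Fintype V] [DecidableEq V] (G : SimpleGraph V) (σ : V → V → ℂ)
    (p : ℕ) [NeZero p] (hσ : IsSignature G σ)
    (hval : ∀ u v, G.Adj u v → σ u v ^ p = 1)
    (mσ : V → ℂ) (hmσ : InAE G σ mσ) :
    ∃ m : V × rootsOfUnity p ℂ → ℂ,
      InAE (liftGraph G σ p) triv m ∧ compress p m = mσ ∧
      aeNorm (liftGraph G σ p) triv m = aeNorm G σ mσ ∧
      ∀ m' : V × rootsOfUnity p ℂ → ℂ, InAE (liftGraph G σ p) triv m' →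
        compress p m' = mσ → aeNorm G σ mσ ≤ aeNorm (liftGraph G σ p) triv m' := by
  obtain ⟨n, a, u, v, hadj, hrep, hnorm⟩ := exists_rep_sum_norm_eq_aeNorm hmσ
  obtain ⟨m, hm, hcm, hle⟩ := exists_lift_of_rep hval a u v hadj hrep
  have hlower m' (hm' : InAE (liftGraph G σ p) triv m') (hcm' : compress p m' = mσ) :
      aeNorm G σ mσ ≤ aeNorm (liftGraph G σ p) triv m' :=
    hcm' ▸ aeNorm_compress_le hσ hm'
  exact ⟨m, hm, hcm, le_antisymm (hle.trans hnorm.le) (hlower m hm hcm), hlower⟩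

end MagneticGraph
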